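/- Fix an integer p ≥ 2, an integer N ≥ 2, positive integers a_1, ..., a_N, and define ν(I) = Σ_{j=1}^r p^{i_1 + ⋯ + i_{j-1}} a_{i_j} and μ(I) = i_1 + ⋯ + i_r for I ∈ {1,...,N}^r. Let M be the set of minimizers of ν. Then the componentwise maximum (max_{J∈M} j_1, ..., max_{J∈M} j_r) lies in M, and it is the unique element of M of maximal weight μ; similarly, the componentwise minimum lies in M and is the unique element of minimal weight. -/

import Mathlib

/-- The valuation `ν(I) = ∑_{j=1}^r p^(i_1 + ⋯ + i_{j-1}) · a_{i_j}` of a tuple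
`I ∈ {1,…,N}^r`, where the entry `I j : Fin N` represents the value `(I j) + 1`. -/
def tupleVal (p : ℕ) {N r : ℕ} (a : Fin N → ℕ) (I : Fin r → Fin N) : ℕ :=
  ∑ j : Fin r, p ^ (∑ l ∈ Finset.Iio j, ((I l : ℕ) + 1)) * a (I j)

/-- The weight `μ(I) = i_1 + ⋯ + i_r` of a tuple `I ∈ {1,…,N}^r`. -/
def tupleWeight {N r : ℕ} (I : Fin r → Fin N) : ℕ :=
  ∑ j : Fin r, ((I j : ℕ) + 1)

/-!
Peeling off the first letter gives `ν(i :: I) = a_i + p^i · ν(I)`. Since `p^i > 0`, a tuple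
`i :: I` minimizes `ν` exactly when `I` minimizes `ν` one level down and `i` minimizes
`a_i + p^i · min ν`. By induction the set of minimizers is therefore a product
`S₁ × ⋯ × S_r` of subsets of the chain `{1,…,N}`, hence closed under componentwise `max` and
`min`. Being finite and nonempty, it has a greatest and a least element, and these are the
unique minimizers of extremal weight because `μ` is strictly monotone.
-/

open Finset

theorem Fin.sum_Iio_succ {M : Type*} [AddCommMonoid M] {n : ℕ} (f : Fin (n + 1) → M)
    (j : Fin n) : ∑ l ∈ Iio j.succ, f l = f 0 + ∑ l ∈ Iio j, f l.succ := by
  rw [← Ico_bot, bot_eq_zero, ← Ioo_insert_left (Fin.succ_pos j), sum_insert (by simp),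
    ← Fin.map_succEmb_Iio, sum_map]
  rfl

theorem StrictMono.eq_of_le_of_apply_eq {α β : Type*} [PartialOrder α] [Preorder β]
    {f : α → β} (hf : StrictMono f) {x y : α} (hxy : x ≤ y) (h : f x = f y) : x = y :=
  hxy.eq_or_lt.resolve_right fun hlt => (hf hlt).ne h

theorem SupClosed.exists_isGreatest {α : Type*} [SemilatticeSup α] {s : Set α}
    (hs : SupClosed s) (hfin : s.Finite) (hne : s.Nonempty) : ∃ x, IsGreatest s x :=
  ⟨hfin.toFinset.sup' (by simpa) id, hs.finsetSup'_mem _ (by simp),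
    fun _ hy => le_sup' id (by simpa using hy)⟩

theorem InfClosed.exists_isLeast {α : Type*} [SemilatticeInf α] {s : Set α}
    (hs : InfClosed s) (hfin : s.Finite) (hne : s.Nonempty) : ∃ x, IsLeast s x :=
  ⟨hfin.toFinset.inf' (by simpa) id, hs.finsetInf'_mem _ (by simp),
    fun _ hy => inf'_le id (by simpa using hy)⟩

section TupleVal

variable {N : ℕ} (a : Fin N → ℕ)

/-- The set `M` of tuples minimizing `ν`. -/
def tupleValMinimizers (p : ℕ) (r : ℕ) : Set (Fin r → Fin N) :=
  {I | ∀ K : Fin r → Fin N, tupleVal p a I ≤ tupleVal p a K}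

theorem tupleValMinimizers_nonempty (p r : ℕ) [NeZero N] :
    (tupleValMinimizers a p r).Nonempty :=
  Finite.exists_min (tupleVal p a)

variable {p r : ℕ}

theorem tupleVal_cons (i : Fin N) (I : Fin r → Fin N) :
    tupleVal p a (Fin.cons i I) = a i + p ^ ((i : ℕ) + 1) * tupleVal p a I := by
  simp only [tupleVal, Fin.sum_univ_succ, Fin.sum_Iio_succ, Fin.cons_zero, Fin.cons_succ,
    (Iio_eq_empty.2 (isMin_iff_eq_bot.2 rfl) : Iio (0 : Fin (r + 1)) = ∅), sum_empty, pow_zero,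
    one_mul, pow_add, mul_sum, mul_assoc]

theorem tupleWeight_strictMono : StrictMono (tupleWeight : (Fin r → Fin N) → ℕ) := by
  intro I J hIJ
  obtain ⟨hle, j, hlt⟩ := Pi.lt_def.1 hIJ
  exact sum_lt_sum (fun k _ => Nat.succ_le_succ (hle k)) ⟨j, mem_univ j, Nat.succ_lt_succ hlt⟩

theorem cons_mem_tupleValMinimizers_iff (hp : 0 < p) {I₀ : Fin r → Fin N}
    (hI₀ : I₀ ∈ tupleValMinimizers a p r) (i : Fin N) (I : Fin r → Fin N) :
    Fin.cons i I ∈ tupleValMinimizers a p (r + 1) ↔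
      (∀ k, a i + p ^ ((i : ℕ) + 1) * tupleVal p a I₀ ≤
        a k + p ^ ((k : ℕ) + 1) * tupleVal p a I₀) ∧ I ∈ tupleValMinimizers a p r := by
  simp only [tupleValMinimizers, Set.mem_ofPred_eq, Fin.forall_fin_succ_pi, tupleVal_cons]
  constructor
  · intro h
    have hI : tupleVal p a I ≤ tupleVal p a I₀ :=
      le_of_mul_le_mul_left (Nat.le_of_add_le_add_left (h i I₀)) (by positivity)
    have hII₀ : tupleVal p a I = tupleVal p a I₀ := le_antisymm hI (hI₀ I)
    exact ⟨fun k => hII₀ ▸ h k I₀, fun K => hI.trans (hI₀ K)⟩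
  · rintro ⟨hi, hI⟩ k K
    rw [le_antisymm (hI I₀) (hI₀ I)]
    exact (hi k).trans (by gcongr; exact hI₀ K)

theorem exists_tupleValMinimizers_eq_pi (hp : 0 < p) [NeZero N] :
    ∀ r, ∃ S : Fin r → Set (Fin N), tupleValMinimizers a p r = Set.univ.pi S
  | 0 => ⟨fun _ => ∅, by ext I; simp [tupleValMinimizers, tupleVal]⟩
  | r + 1 => by
    obtain ⟨S, hS⟩ := exists_tupleValMinimizers_eq_pi hp r
    obtain ⟨I₀, hI₀⟩ := tupleValMinimizers_nonempty a p r
    refine ⟨Fin.cons {i | ∀ k, a i + p ^ ((i : ℕ) + 1) * tupleVal p a I₀ ≤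
      a k + p ^ ((k : ℕ) + 1) * tupleVal p a I₀} S, Set.ext (Fin.forall_fin_succ_pi.2 ?_)⟩
    intro i I
    rw [cons_mem_tupleValMinimizers_iff a hp hI₀, hS]
    simp only [Set.mem_univ_pi, Fin.forall_fin_succ, Fin.cons_zero, Fin.cons_succ,
      Set.mem_ofPred_eq]

theorem supClosed_tupleValMinimizers (hp : 0 < p) [NeZero N] :
    SupClosed (tupleValMinimizers a p r) := by
  obtain ⟨S, hS⟩ := exists_tupleValMinimizers_eq_pi a hp r
  exact hS ▸ supClosed_pi fun j _ => LinearOrder.supClosed (S j)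

theorem infClosed_tupleValMinimizers (hp : 0 < p) [NeZero N] :
    InfClosed (tupleValMinimizers a p r) := by
  obtain ⟨S, hS⟩ := exists_tupleValMinimizers_eq_pi a hp r
  exact hS ▸ infClosed_pi fun j _ => LinearOrder.infClosed (S j)

end TupleVal

theorem extremal_minimizers_general
    (p N r : ℕ) (hp : 2 ≤ p) (hN : 2 ≤ N)
    (a : Fin N → ℕ) :
    (∃ Imax : Fin r → Fin N,
        (∀ K : Fin r → Fin N, tupleVal p a Imax ≤ tupleVal p a K) ∧
        (∀ J : Fin r → Fin N, (∀ K : Fin r → Fin N, tupleVal p a J ≤ tupleVal p a K) →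
          ∀ α : Fin r, J α ≤ Imax α) ∧
        (∀ J : Fin r → Fin N, (∀ K : Fin r → Fin N, tupleVal p a J ≤ tupleVal p a K) →
          tupleWeight J ≤ tupleWeight Imax) ∧
        (∀ J : Fin r → Fin N, (∀ K : Fin r → Fin N, tupleVal p a J ≤ tupleVal p a K) →
          tupleWeight J = tupleWeight Imax → J = Imax)) ∧
    (∃ Imin : Fin r → Fin N,
        (∀ K : Fin r → Fin N, tupleVal p a Imin ≤ tupleVal p a K) ∧
        (∀ J : Fin r → Fin N, (∀ K : Fin r → Fin N, tupleVal p a J ≤ tupleVal p a K) →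
          ∀ α : Fin r, Imin α ≤ J α) ∧
        (∀ J : Fin r → Fin N, (∀ K : Fin r → Fin N, tupleVal p a J ≤ tupleVal p a K) →
          tupleWeight Imin ≤ tupleWeight J) ∧
        (∀ J : Fin r → Fin N, (∀ K : Fin r → Fin N, tupleVal p a J ≤ tupleVal p a K) →
          tupleWeight J = tupleWeight Imin → J = Imin)) := by
  have : NeZero N := ⟨by omega⟩
  have hp0 : 0 < p := by omega
  have hfin := (tupleValMinimizers a p r).toFinite
  have hne := tupleValMinimizers_nonempty a p r
  have hμ := tupleWeight_strictMono (N := N) (r := r)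
  obtain ⟨Imax, hmax_mem, hmax⟩ :=
    (supClosed_tupleValMinimizers a hp0).exists_isGreatest hfin hne
  obtain ⟨Imin, hmin_mem, hmin⟩ :=
    (infClosed_tupleValMinimizers a hp0).exists_isLeast hfin hne
  exact ⟨⟨Imax, hmax_mem, fun J hJ => hmax hJ, fun J hJ => hμ.monotone (hmax hJ),
      fun J hJ => hμ.eq_of_le_of_apply_eq (hmax hJ)⟩,
    ⟨Imin, hmin_mem, fun J hJ => hmin hJ, fun J hJ => hμ.monotone (hmin hJ),
      fun J hJ h => (hμ.eq_of_le_of_apply_eq (hmin hJ) h.symm).symm⟩⟩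

/-- Among the minimizers of `ν`, the componentwise maximum is again a minimizer and
is the unique minimizer of maximal weight; similarly the componentwise minimum is a
minimizer and is the unique minimizer of minimal weight. -/
theorem extremal_minimizers
    (p N r : ℕ) (hp : 2 ≤ p) (hN : 2 ≤ N) (hr : 1 ≤ r)
    (a : Fin N → ℕ) (ha : ∀ i, 0 < a i) :
    (∃ Imax : Fin r → Fin N,
        (∀ K : Fin r → Fin N, tupleVal p a Imax ≤ tupleVal p a K) ∧
        (∀ J : Fin r → Fin N, (∀ K : Fin r → Fin N, tupleVal p a J ≤ tupleVal p a K) →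
          ∀ α : Fin r, J α ≤ Imax α) ∧
        (∀ J : Fin r → Fin N, (∀ K : Fin r → Fin N, tupleVal p a J ≤ tupleVal p a K) →
          tupleWeight J ≤ tupleWeight Imax) ∧
        (∀ J : Fin r → Fin N, (∀ K : Fin r → Fin N, tupleVal p a J ≤ tupleVal p a K) →
          tupleWeight J = tupleWeight Imax → J = Imax)) ∧
    (∃ Imin : Fin r → Fin N,
        (∀ K : Fin r → Fin N, tupleVal p a Imin ≤ tupleVal p a K) ∧
        (∀ J : Fin r → Fin N, (∀ K : Fin r → Fin N, tupleVal p a J ≤ tupleVal p a K) →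
          ∀ α : Fin r, Imin α ≤ J α) ∧
        (∀ J : Fin r → Fin N, (∀ K : Fin r → Fin N, tupleVal p a J ≤ tupleVal p a K) →
          tupleWeight Imin ≤ tupleWeight J) ∧
        (∀ J : Fin r → Fin N, (∀ K : Fin r → Fin N, tupleVal p a J ≤ tupleVal p a K) →
          tupleWeight J = tupleWeight Imin → J = Imin)) :=
  extremal_minimizers_general p N r hp hN a
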